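/- arXiv:2605.07331 — 2 statements merged into one kernel-verified Lean document; each statement's English description precedes it below -/
import Mathlib

section
/- (Degenerate suffix ratio forces policy agreement.) Fix 1 ≤ t < H and a prefix p ∈ V^t. If the conditional variance of the suffix ratio ε_t given a_{1:t} = p under P_b is zero, then ε_t equals 1 on every trajectory extending p, and moreover π_θ(a|q) = π_b(a|q) for every position t' with t < t' ≤ H, every prefix q ∈ V^{t'−1} extending p, and every token a ∈ V. -/
/-- Per-token importance ratio `r_{i+1}(a) = πθ(a_i | a_{<i}) / πb(a_i | a_{<i})`. -/
noncomputable def tokRatio {V : Type*} (H : ℕ) (πθ πb : List V → V → ℝ)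
    (i : Fin H) (a : Fin H → V) : ℝ :=
  πθ ((List.ofFn a).take (i : ℕ)) (a i) / πb ((List.ofFn a).take (i : ℕ)) (a i)

/-- Glue a prefix `p ∈ V^t` and a suffix `s ∈ V^{H-t}` into a full trajectory in `V^H`. -/
def glue {V : Type*} {H t : ℕ} (ht : t ≤ H) (p : Fin t → V) (s : Fin (H - t) → V) :
    Fin H → V :=
  fun i =>
    if h : (i : ℕ) < t then p ⟨i, h⟩
    else s ⟨(i : ℕ) - t, by have := i.isLt; omega⟩

/-- Conditional probability of the suffix after position `t` given the prefix:
`∏_{t' = t+1}^{H} π(a_{t'} | a_{<t'})`. -/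
noncomputable def suffProb {V : Type*} (H : ℕ) (π : List V → V → ℝ)
    (t : ℕ) (a : Fin H → V) : ℝ :=
  ∏ i ∈ Finset.univ.filter (fun i : Fin H => t ≤ (i : ℕ)),
    π ((List.ofFn a).take (i : ℕ)) (a i)

/-- Suffix importance ratio `ε_t(a) = ∏_{t' = t+1}^{H} r_{t'}(a)`. -/
noncomputable def suffRatio {V : Type*} (H : ℕ) (πθ πb : List V → V → ℝ)
    (t : ℕ) (a : Fin H → V) : ℝ :=
  ∏ i ∈ Finset.univ.filter (fun i : Fin H => t ≤ (i : ℕ)), tokRatio H πθ πb i a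

/-- Conditional mean of the suffix ratio `ε_t` given the prefix `p`, under the
conditional distribution of the suffix under `P_b`. -/
noncomputable def condMeanSuff {V : Type*} [Fintype V] (H : ℕ)
    (πθ πb : List V → V → ℝ) {t : ℕ} (ht : t ≤ H) (p : Fin t → V) : ℝ :=
  ∑ s : Fin (H - t) → V,
    suffProb H πb t (glue ht p s) * suffRatio H πθ πb t (glue ht p s)

/-- Conditional variance `V_t(p)` of the suffix ratio `ε_t` given the prefix `p`,
under the conditional distribution of the suffix under `P_b`. -/
noncomputable def condVarSuff {V : Type*} [Fintype V] (H : ℕ)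
    (πθ πb : List V → V → ℝ) {t : ℕ} (ht : t ≤ H) (p : Fin t → V) : ℝ :=
  ∑ s : Fin (H - t) → V,
    suffProb H πb t (glue ht p s) *
      (suffRatio H πθ πb t (glue ht p s) - condMeanSuff H πθ πb ht p) ^ 2

/-- Product of conditionals of π along a suffix `l` appended after a prefix `q`. -/
noncomputable def pathProd {V : Type*} (π : List V → V → ℝ) : List V → List V → ℝ
  | _, [] => 1
  | q, v :: s => π q v * pathProd π (q ++ [v]) s

@[simp] lemma pathProd_nil {V : Type*} (π : List V → V → ℝ) (q : List V) :
    pathProd π q [] = 1 := rfl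

@[simp] lemma pathProd_cons {V : Type*} (π : List V → V → ℝ) (q : List V) (v : V) (s : List V) :
    pathProd π q (v :: s) = π q v * pathProd π (q ++ [v]) s := rfl

lemma pathProd_append {V : Type*} (π : List V → V → ℝ) (s : List V) :
    ∀ (q c : List V), pathProd π q (s ++ c) = pathProd π q s * pathProd π (q ++ s) c := by
  induction s with
  | nil => intro q c; simp
  | cons v s ih => intro q c; simp [ih, mul_assoc]

lemma pathProd_pos {V : Type*} {π : List V → V → ℝ} (h : ∀ q v, 0 < π q v) (l : List V) :
    ∀ q, 0 < pathProd π q l := by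
  induction l with
  | nil => intro q; simp
  | cons v s ih => intro q; simpa using mul_pos (h q v) (ih (q ++ [v]))

lemma sum_pathProd {V : Type*} [Fintype V] {π : List V → V → ℝ}
    (h : ∀ q : List V, ∑ v : V, π q v = 1) :
    ∀ (n : ℕ) (q : List V), ∑ s : Fin n → V, pathProd π q (List.ofFn s) = 1 := by
  intro n
  induction n with
  | zero => intro q; simp
  | succ n ih =>
      intro q
      rw [← (Fin.consEquiv (fun _ : Fin (n+1) => V)).sum_comp]
      rw [Fintype.sum_prod_type]
      have hc : ∀ (v : V) (s : Fin n → V),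
          List.ofFn ((Fin.consEquiv fun _ : Fin (n+1) => V) (v, s)) = v :: List.ofFn s := by
        intro v s
        show List.ofFn (Fin.cons v s) = v :: List.ofFn s
        simp [List.ofFn_succ]
      simp only [hc, pathProd_cons]
      calc ∑ v : V, ∑ s : Fin n → V, π q v * pathProd π (q ++ [v]) (List.ofFn s)
          = ∑ v : V, π q v * ∑ s : Fin n → V, pathProd π (q ++ [v]) (List.ofFn s) := by
            simp [Finset.mul_sum]
        _ = 1 := by simp [ih, h q]

lemma pathProd_ofFn {V : Type*} (π : List V → V → ℝ) :
    ∀ (n : ℕ) (s : Fin n → V) (q : List V),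
      pathProd π q (List.ofFn s)
        = ∏ j : Fin n, π (q ++ (List.ofFn s).take (j : ℕ)) (s j) := by
  intro n
  induction n with
  | zero => intro s q; simp
  | succ n ih =>
      intro s q
      rw [List.ofFn_succ, pathProd_cons, ih (fun j => s j.succ), Fin.prod_univ_succ]
      congr 1
      · simp
      · apply Finset.prod_congr rfl
        intro j _
        congr 1
        simp [List.take_succ_cons]

lemma ofFn_glue {V : Type*} {H t : ℕ} (ht : t ≤ H) (p : Fin t → V) (s : Fin (H - t) → V) :
    List.ofFn (glue ht p s) = List.ofFn p ++ List.ofFn s := by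
  apply List.ext_getElem
  · simp; omega
  · intro k h1 h2
    simp only [List.getElem_ofFn, glue]
    rcases lt_or_ge k t with h | h
    · rw [List.getElem_append_left (by simpa using h)]
      simp [h]
    · rw [List.getElem_append_right (by simpa using h)]
      simp [Nat.not_lt.mpr h]

lemma suffProb_eq {V : Type*} {H t : ℕ} (π : List V → V → ℝ) (ht : t < H)
    (p : Fin t → V) (s : Fin (H - t) → V) :
    suffProb H π t (glue ht.le p s) = pathProd π (List.ofFn p) (List.ofFn s) := by
  rw [pathProd_ofFn]
  unfold suffProb
  refine Finset.prod_nbij'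
    (fun i : Fin H => (⟨(i : ℕ) - t, by have := i.isLt; omega⟩ : Fin (H - t)))
    (fun j : Fin (H - t) => (⟨t + (j : ℕ), by have := j.isLt; omega⟩ : Fin H))
    ?_ ?_ ?_ ?_ ?_
  · intro a _; simp
  · intro j _; simp
  · intro a ha
    have : t ≤ (a : ℕ) := by simpa using ha
    ext; simp; omega
  · intro j _; ext; simp
  · intro a ha
    have hta : t ≤ (a : ℕ) := by simpa using ha
    have h1 : (List.ofFn (glue ht.le p s)).take (a : ℕ)
        = List.ofFn p ++ (List.ofFn s).take ((a : ℕ) - t) := by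
      rw [ofFn_glue, List.take_append]
      congr 1
      · exact List.take_of_length_le (by simpa using hta)
      · congr 1; simp
    have h2 : glue ht.le p s a = s ⟨(a : ℕ) - t, by have := a.isLt; omega⟩ := by
      simp [glue, Nat.not_lt.mpr hta]
    rw [h1, h2]

/-- degenerate suffix ratio forces policy agreement: fix `1 ≤ t < H`
and a prefix `p ∈ V^t`. If the conditional variance of `ε_t` given `a_{1:t} = p`
under `P_b` is zero, then `ε_t = 1` on every trajectory extending `p`, and
`πθ(v|q) = πb(v|q)` for every 1-indexed position `t'` with `t < t' ≤ H`, every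
prefix `q ∈ V^{t'-1}` extending `p`, and every token `v`. -/
theorem zero_conditional_variance_forces_agreement {V : Type*} [Fintype V] [Nonempty V]
    (H : ℕ) (hH : 1 ≤ H) (πθ πb : List V → V → ℝ)
    (hθ_nonneg : ∀ p v, 0 ≤ πθ p v) (hθ_sum : ∀ p : List V, ∑ v : V, πθ p v = 1)
    (hb_pos : ∀ p v, 0 < πb p v) (hb_sum : ∀ p : List V, ∑ v : V, πb p v = 1)
    (t : ℕ) (ht1 : 1 ≤ t) (ht2 : t < H) (p : Fin t → V)
    (hvar : condVarSuff H πθ πb ht2.le p = 0) :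
    (∀ s : Fin (H - t) → V, suffRatio H πθ πb t (glue ht2.le p s) = 1) ∧
      ∀ t' : ℕ, t < t' → t' ≤ H →
        ∀ q : List V, q.length = t' - 1 → List.ofFn p <+: q →
          ∀ v : V, πθ q v = πb q v := by
  -- per-trajectory relation between suffProb's and suffRatio
  have key : ∀ s : Fin (H - t) → V,
      suffProb H πb t (glue ht2.le p s) * suffRatio H πθ πb t (glue ht2.le p s)
        = suffProb H πθ t (glue ht2.le p s) := by
    intro s
    unfold suffProb suffRatio tokRatio
    rw [← Finset.prod_mul_distrib]
    exact Finset.prod_congr rfl fun i _ => by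
      rw [mul_comm, div_mul_cancel₀ _ (hb_pos _ _).ne']
  have hbpos : ∀ s : Fin (H - t) → V, 0 < suffProb H πb t (glue ht2.le p s) := by
    intro s
    rw [suffProb_eq πb ht2]
    exact pathProd_pos hb_pos _ _
  have hsumθ : ∑ s : Fin (H - t) → V, suffProb H πθ t (glue ht2.le p s) = 1 := by
    simp_rw [suffProb_eq πθ ht2]
    exact sum_pathProd hθ_sum _ _
  -- the conditional mean equals 1
  have hm1 : condMeanSuff H πθ πb ht2.le p = 1 := by
    unfold condMeanSuff
    simp_rw [key]
    exact hsumθ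
  -- zero variance forces the ratio to equal the mean on every suffix
  have hconst : ∀ s : Fin (H - t) → V,
      suffRatio H πθ πb t (glue ht2.le p s) = 1 := by
    intro s
    have h0 : ∀ s ∈ (Finset.univ : Finset (Fin (H - t) → V)),
        suffProb H πb t (glue ht2.le p s) *
          (suffRatio H πθ πb t (glue ht2.le p s) - condMeanSuff H πθ πb ht2.le p) ^ 2 = 0 :=
      (Finset.sum_eq_zero_iff_of_nonneg
        (fun s _ => mul_nonneg (hbpos s).le (sq_nonneg _))).mp hvar
    have := h0 s (Finset.mem_univ s)
    rcases mul_eq_zero.mp this with h | h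
    · exact absurd h (hbpos s).ne'
    · have := pow_eq_zero_iff (n := 2) (by norm_num) |>.mp h
      have := sub_eq_zero.mp this
      rw [this, hm1]
  refine ⟨hconst, ?_⟩
  -- path products of πθ and πb agree on all full suffixes
  have hpathEq : ∀ s : Fin (H - t) → V,
      pathProd πθ (List.ofFn p) (List.ofFn s) = pathProd πb (List.ofFn p) (List.ofFn s) := by
    intro s
    have hk := key s
    rw [hconst s, mul_one] at hk
    rw [← suffProb_eq πθ ht2, ← hk, suffProb_eq πb ht2]
  have hlistEq : ∀ e : List V, e.length = H - t →
      pathProd πθ (List.ofFn p) e = pathProd πb (List.ofFn p) e := by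
    intro e he
    have h : e = List.ofFn (fun i : Fin (H - t) => e[(i : ℕ)]'(by omega)) := by
      apply List.ext_getElem
      · simp [he]
      · intro k h1 h2; simp
    rw [h]
    exact hpathEq _
  -- marginalize: path products agree on all partial suffixes
  have hP : ∀ r : List V, r.length ≤ H - t →
      pathProd πθ (List.ofFn p) r = pathProd πb (List.ofFn p) r := by
    intro r hr
    have hfac : ∀ (π : List V → V → ℝ), (∀ l : List V, ∑ v : V, π l v = 1) →
        ∑ c : Fin (H - t - r.length) → V,
            pathProd π (List.ofFn p) (r ++ List.ofFn c)
          = pathProd π (List.ofFn p) r := by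
      intro π hπ
      calc ∑ c : Fin (H - t - r.length) → V,
              pathProd π (List.ofFn p) (r ++ List.ofFn c)
          = ∑ c : Fin (H - t - r.length) → V,
              pathProd π (List.ofFn p) r * pathProd π (List.ofFn p ++ r) (List.ofFn c) := by
            simp_rw [pathProd_append]
        _ = pathProd π (List.ofFn p) r := by
            rw [← Finset.mul_sum, sum_pathProd hπ, mul_one]
    rw [← hfac πθ hθ_sum, ← hfac πb hb_sum]
    apply Finset.sum_congr rfl
    intro c _
    exact hlistEq _ (by simp; omega)
  intro t' ht' ht'H q hq hpre v
  obtain ⟨r, hr⟩ := hpre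
  have hrl : r.length = t' - 1 - t := by
    have := congrArg List.length hr
    simp [hq] at this
    omega
  have h1 : pathProd πθ (List.ofFn p) r = pathProd πb (List.ofFn p) r := hP r (by omega)
  have h2 : pathProd πθ (List.ofFn p) (r ++ [v]) = pathProd πb (List.ofFn p) (r ++ [v]) :=
    hP _ (by simp [hrl]; omega)
  rw [pathProd_append, pathProd_append] at h2
  simp only [pathProd_cons, pathProd_nil, mul_one] at h2
  rw [h1, hr] at h2
  exact mul_left_cancel₀ (pathProd_pos hb_pos r (List.ofFn p)).ne' h2
end

section
/- (Variance ratio formula.) Assume the per-token ratios r_1,…,r_H, viewed as random variables on (V^H, P_b), are mutually independent, and fix 1 ≤ t ≤ H such that χ²_{t'} > 0 for at least one t' ≤ t (equivalently, Var_{P_b}(ρ_t^cum) > 0). Then Var_{P_b}(ρ^seq) / Var_{P_b}(ρ_t^cum) = ( ∏_{t'=1}^{H} (1 + χ²_{t'}) − 1 ) / ( ∏_{t'=1}^{t} (1 + χ²_{t'}) − 1 ). -/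
/-- Trajectory probability on `Fin H → V` induced by a stepwise policy. -/
noncomputable def traj {V : Type*} (H : ℕ) (π : List V → V → ℝ) (a : Fin H → V) : ℝ :=
  ∏ i : Fin H, π ((List.ofFn a).take (i : ℕ)) (a i)

/-- Cumulative token importance ratio `ρ_t^cum(a) = ∏_{t' ≤ t} r_{t'}(a)`;
the full sequence ratio is `ρ^seq = ρ_H^cum`. -/
noncomputable def cumRatio {V : Type*} (H : ℕ) (πθ πb : List V → V → ℝ)
    (t : ℕ) (a : Fin H → V) : ℝ :=
  ∏ i ∈ Finset.univ.filter (fun i : Fin H => (i : ℕ) < t), tokRatio H πθ πb i a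

/-- Expectation of `f` on a finite space weighted by `P`. -/
noncomputable def expec {α : Type*} [Fintype α] (P : α → ℝ) (f : α → ℝ) : ℝ :=
  ∑ a : α, P a * f a

/-- Variance of `f` on a finite space weighted by `P`. -/
noncomputable def pvar {α : Type*} [Fintype α] (P : α → ℝ) (f : α → ℝ) : ℝ :=
  expec P fun a => (f a - expec P f) ^ 2

/-- Chi-square divergence `χ²(p‖q) = ∑_v (p v − q v)² / q v`. -/
noncomputable def chiSq {V : Type*} [Fintype V] (p q : V → ℝ) : ℝ :=
  ∑ v : V, (p v - q v) ^ 2 / q v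

/-- Averaged local chi-square divergence at (0-indexed) position `i`:
`χ²_{i+1} = E_{a ~ P_b}[ χ²(πθ(·|a_{<i}) ‖ πb(·|a_{<i})) ]`. -/
noncomputable def avgChiSq {V : Type*} [Fintype V] (H : ℕ)
    (πθ πb : List V → V → ℝ) (i : Fin H) : ℝ :=
  ∑ a : Fin H → V,
    traj H πb a *
      chiSq (πθ ((List.ofFn a).take (i : ℕ))) (πb ((List.ofFn a).take (i : ℕ)))

/-- Mutual independence of finitely many real random variables `X i` on a finite
probability space weighted by `P`: the joint law of `(X 1, …, X n)` factorizes as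
the product of the marginal laws. -/
def MutIndep {α : Type*} [Fintype α] (P : α → ℝ) {n : ℕ} (X : Fin n → α → ℝ) : Prop :=
  ∀ x : Fin n → ℝ,
    (∑ a : α, {a : α | ∀ i, X i a = x i}.indicator P a)
      = ∏ i : Fin n, ∑ a : α, {a : α | X i a = x i}.indicator P a

/-! ### Auxiliary lemmas -/

set_option linter.unusedSectionVars false

section Tree
variable {V : Type*} [Fintype V]

lemma traj_cons (n : ℕ) (π : List V → V → ℝ) (v : V) (b : Fin n → V) :
    traj (n+1) π (Fin.cons v b) = π [] v * traj n (fun p => π (v :: p)) b := by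
  unfold traj
  have h1 : List.ofFn (Fin.cons v b) = v :: List.ofFn b := by
    rw [List.ofFn_succ]; simp
  rw [Fin.prod_univ_succ]
  simp only [h1, Fin.cons_zero, Fin.cons_succ, List.take_zero, Fin.val_succ,
    List.take_succ_cons]
  rfl

lemma sum_succ {n : ℕ} (g : (Fin (n+1) → V) → ℝ) :
    ∑ a : Fin (n+1) → V, g a = ∑ v : V, ∑ b : Fin n → V, g (Fin.cons v b) := by
  rw [← (Fin.consEquiv (fun _ => V)).sum_comp g, Fintype.sum_prod_type]
  rfl

lemma sum_traj : ∀ (n : ℕ) (π : List V → V → ℝ),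
    (∀ p, ∑ w : V, π p w = 1) → ∑ a : Fin n → V, traj n π a = 1
  | 0, π, hπ => by simp [traj]
  | (n+1), π, hπ => by
    rw [sum_succ]
    have h : ∀ v : V, ∑ b : Fin n → V, traj (n+1) π (Fin.cons v b) = π [] v := by
      intro v
      simp_rw [traj_cons]
      rw [← Finset.mul_sum, sum_traj n _ (fun p => hπ (v :: p)), mul_one]
    simp_rw [h]
    exact hπ []

lemma prefix_cons (n : ℕ) (v : V) (b : Fin n → V) (j : Fin n) :
    (List.ofFn (Fin.cons v b)).take ((j.succ : ℕ)) = v :: (List.ofFn b).take (j : ℕ) := by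
  have h1 : List.ofFn (Fin.cons v b) = v :: List.ofFn b := by
    rw [List.ofFn_succ]; simp
  rw [h1]
  simp

lemma cond_exp (n : ℕ) : ∀ (π h : List V → V → ℝ), (∀ p, ∑ w : V, π p w = 1) →
    ∀ (i : Fin n),
    ∑ a : Fin n → V, traj n π a * h ((List.ofFn a).take (i : ℕ)) (a i)
      = ∑ a : Fin n → V, traj n π a *
          ∑ w : V, π ((List.ofFn a).take (i : ℕ)) w * h ((List.ofFn a).take (i : ℕ)) w := by
  induction n with
  | zero => intro π h hπ i; exact i.elim0
  | succ n ih =>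
    intro π h hπ i
    rw [sum_succ, sum_succ (g := fun a => traj (n+1) π a * ∑ w : V, _ * _)]
    induction i using Fin.cases with
    | zero =>
      have L : ∀ v : V, ∑ b : Fin n → V,
          traj (n+1) π (Fin.cons v b) *
            h ((List.ofFn (Fin.cons v b)).take ((0 : Fin (n+1)) : ℕ))
              ((Fin.cons v b : Fin (n+1) → V) 0)
          = π [] v * h [] v := by
        intro v
        simp only [Fin.val_zero, List.take_zero, Fin.cons_zero, traj_cons]
        rw [← Finset.sum_mul, ← Finset.mul_sum, sum_traj n _ (fun p => hπ (v :: p)), mul_one]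
      have R : ∀ v : V, ∑ b : Fin n → V,
          traj (n+1) π (Fin.cons v b) *
            ∑ w : V, π ((List.ofFn (Fin.cons v b)).take ((0 : Fin (n+1)) : ℕ)) w *
              h ((List.ofFn (Fin.cons v b)).take ((0 : Fin (n+1)) : ℕ)) w
          = π [] v * ∑ w : V, π [] w * h [] w := by
        intro v
        simp only [Fin.val_zero, List.take_zero, traj_cons]
        rw [← Finset.sum_mul, ← Finset.mul_sum, sum_traj n _ (fun p => hπ (v :: p)), mul_one]
      simp_rw [L, R]
      rw [← Finset.sum_mul (f := fun v : V => π [] v), hπ [], one_mul]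
    | succ j =>
      have L : ∀ v : V, ∑ b : Fin n → V,
          traj (n+1) π (Fin.cons v b) *
            h ((List.ofFn (Fin.cons v b)).take ((j.succ : ℕ)))
              ((Fin.cons v b : Fin (n+1) → V) j.succ)
          = π [] v * ∑ b : Fin n → V, traj n (fun p => π (v :: p)) b *
              ∑ w : V, π (v :: (List.ofFn b).take (j : ℕ)) w *
                h (v :: (List.ofFn b).take (j : ℕ)) w := by
        intro v
        simp only [prefix_cons, Fin.cons_succ, traj_cons, mul_assoc]
        rw [← Finset.mul_sum]
        congr 1
        exact ih (fun p => π (v :: p)) (fun p w => h (v :: p) w) (fun p => hπ (v :: p)) j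
      have R : ∀ v : V, ∑ b : Fin n → V,
          traj (n+1) π (Fin.cons v b) *
            ∑ w : V, π ((List.ofFn (Fin.cons v b)).take ((j.succ : ℕ))) w *
              h ((List.ofFn (Fin.cons v b)).take ((j.succ : ℕ))) w
          = π [] v * ∑ b : Fin n → V, traj n (fun p => π (v :: p)) b *
              ∑ w : V, π (v :: (List.ofFn b).take (j : ℕ)) w *
                h (v :: (List.ofFn b).take (j : ℕ)) w := by
        intro v
        simp only [prefix_cons, traj_cons, mul_assoc]
        rw [← Finset.mul_sum]
      simp_rw [L, R]

end Tree

set_option maxHeartbeats 1000000 in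
lemma expec_prod_of_indep {α : Type*} [Fintype α] (P : α → ℝ) {n : ℕ}
    (X : Fin n → α → ℝ) (hX : MutIndep P X) (f : Fin n → ℝ → ℝ) :
    ∑ a : α, P a * ∏ i, f i (X i a) = ∏ i, ∑ a : α, P a * f i (X i a) := by
  classical
  set R : Fin n → Finset ℝ := fun i => Finset.image (X i) Finset.univ with hR
  have hmem : ∀ (a : α) (i : Fin n), X i a ∈ R i := fun a i =>
    Finset.mem_image_of_mem _ (Finset.mem_univ a)
  have step1 : ∀ a : α, P a * ∏ i, f i (X i a)
      = ∑ x ∈ Fintype.piFinset R,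
          (if ∀ i, X i a = x i then P a else 0) * ∏ i, f i (x i) := by
    intro a
    rw [Finset.sum_eq_single (fun i => X i a)]
    · simp
    · intro x _ hne
      rw [if_neg, zero_mul]
      intro hc
      exact hne (funext fun i => (hc i).symm)
    · intro hnm
      exact absurd (Fintype.mem_piFinset.2 fun i => hmem a i) hnm
  calc ∑ a : α, P a * ∏ i, f i (X i a)
      = ∑ a : α, ∑ x ∈ Fintype.piFinset R,
          (if ∀ i, X i a = x i then P a else 0) * ∏ i, f i (x i) :=
        Finset.sum_congr rfl fun a _ => step1 a
    _ = ∑ x ∈ Fintype.piFinset R,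
          (∑ a : α, if ∀ i, X i a = x i then P a else 0) * ∏ i, f i (x i) := by
        rw [Finset.sum_comm]
        exact Finset.sum_congr rfl fun x _ => (Finset.sum_mul _ _ _).symm
    _ = ∑ x ∈ Fintype.piFinset R,
          (∏ i, ∑ a : α, if X i a = x i then P a else 0) * ∏ i, f i (x i) := by
        refine Finset.sum_congr rfl fun x _ => ?_
        congr 1
        have := hX x
        simpa [Set.indicator_apply, Set.mem_setOf_eq] using this
    _ = ∑ x ∈ Fintype.piFinset R,
          ∏ i, ((∑ a : α, if X i a = x i then P a else 0) * f i (x i)) := by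
        refine Finset.sum_congr rfl fun x _ => ?_
        rw [Finset.prod_mul_distrib]
    _ = ∏ i, ∑ v ∈ R i, (∑ a : α, if X i a = v then P a else 0) * f i v :=
        (Finset.prod_univ_sum R
          (fun i v => (∑ a : α, if X i a = v then P a else 0) * f i v)).symm
    _ = ∏ i, ∑ a : α, P a * f i (X i a) := by
        refine Finset.prod_congr rfl fun i _ => ?_
        simp_rw [Finset.sum_mul]
        rw [Finset.sum_comm]
        refine Finset.sum_congr rfl fun a _ => ?_
        rw [Finset.sum_eq_single (X i a)]
        · simp
        · intro v _ hne
          rw [if_neg (fun hc => hne hc.symm), zero_mul]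
        · intro hnm
          exact absurd (hmem a i) hnm

lemma one_add_chiSq {V : Type*} [Fintype V] (p q : V → ℝ) (hq : ∀ v, 0 < q v)
    (hp1 : ∑ v : V, p v = 1) (hq1 : ∑ v : V, q v = 1) :
    ∑ v : V, (p v) ^ 2 / q v = 1 + chiSq p q := by
  unfold chiSq
  have h : ∀ v ∈ Finset.univ, (p v - q v) ^ 2 / q v = (p v) ^ 2 / q v - 2 * p v + q v := by
    intro v _
    have hv := (hq v).ne'
    field_simp
    ring
  rw [Finset.sum_congr rfl h, Finset.sum_add_distrib, Finset.sum_sub_distrib,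
    ← Finset.mul_sum, hp1, hq1]
  ring

lemma pvar_eq {α : Type*} [Fintype α] (P f : α → ℝ) (hP : ∑ a : α, P a = 1) :
    pvar P f = (∑ a : α, P a * f a ^ 2) - (expec P f) ^ 2 := by
  unfold pvar expec
  set m := ∑ a : α, P a * f a with hm
  have h : ∀ a ∈ Finset.univ, P a * (f a - m) ^ 2
      = P a * f a ^ 2 - 2 * m * (P a * f a) + m ^ 2 * P a := fun a _ => by ring
  rw [Finset.sum_congr rfl h, Finset.sum_add_distrib, Finset.sum_sub_distrib,
    ← Finset.mul_sum, ← Finset.mul_sum, hP, ← hm]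
  ring

/-- variance ratio formula: if the per-token ratios `r_1, …, r_H`
are mutually independent on `(V^H, P_b)`, and `1 ≤ t ≤ H` is such that
`χ²_{t'} > 0` for at least one `t' ≤ t`, then
`Var_{P_b}(ρ^seq) / Var_{P_b}(ρ_t^cum)
  = (∏_{t'=1}^{H} (1 + χ²_{t'}) − 1) / (∏_{t'=1}^{t} (1 + χ²_{t'}) − 1)`. -/
theorem variance_ratio_formula {V : Type*} [Fintype V] [Nonempty V]
    (H : ℕ) (hH : 1 ≤ H) (πθ πb : List V → V → ℝ)
    (hθ_nonneg : ∀ p v, 0 ≤ πθ p v) (hθ_sum : ∀ p : List V, ∑ v : V, πθ p v = 1)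
    (hb_pos : ∀ p v, 0 < πb p v) (hb_sum : ∀ p : List V, ∑ v : V, πb p v = 1)
    (hind : MutIndep (traj H πb) (fun i : Fin H => tokRatio H πθ πb i))
    (t : ℕ) (ht1 : 1 ≤ t) (ht2 : t ≤ H)
    (hpos : ∃ i ∈ Finset.univ.filter (fun i : Fin H => (i : ℕ) < t),
      0 < avgChiSq H πθ πb i) :
    pvar (traj H πb) (cumRatio H πθ πb H) / pvar (traj H πb) (cumRatio H πθ πb t)
      = ((∏ i : Fin H, (1 + avgChiSq H πθ πb i)) - 1) /
          ((∏ i ∈ Finset.univ.filter (fun i : Fin H => (i : ℕ) < t),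
              (1 + avgChiSq H πθ πb i)) - 1) := by
  have hsum1 : ∑ a : Fin H → V, traj H πb a = 1 := sum_traj H πb hb_sum
  -- first moment of each token ratio
  have mom1 : ∀ i : Fin H, ∑ a : Fin H → V, traj H πb a * tokRatio H πθ πb i a = 1 := by
    intro i
    have h := cond_exp H πb (fun p v => πθ p v / πb p v) hb_sum i
    have hin : ∀ p : List V, (∑ w : V, πb p w * (πθ p w / πb p w)) = 1 := by
      intro p
      rw [← hθ_sum p]
      refine Finset.sum_congr rfl fun w _ => ?_
      rw [mul_comm, div_mul_cancel₀ _ (ne_of_gt (hb_pos p w))]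
    calc ∑ a : Fin H → V, traj H πb a * tokRatio H πθ πb i a
        = ∑ a : Fin H → V, traj H πb a *
            ∑ w : V, πb ((List.ofFn a).take (i : ℕ)) w *
              (πθ ((List.ofFn a).take (i : ℕ)) w / πb ((List.ofFn a).take (i : ℕ)) w) := h
      _ = ∑ a : Fin H → V, traj H πb a := by
          refine Finset.sum_congr rfl fun a _ => ?_
          rw [hin, mul_one]
      _ = 1 := hsum1
  -- second moment of each token ratio
  have mom2 : ∀ i : Fin H, ∑ a : Fin H → V, traj H πb a * (tokRatio H πθ πb i a) ^ 2
      = 1 + avgChiSq H πθ πb i := by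
    intro i
    have h := cond_exp H πb (fun p v => (πθ p v / πb p v) ^ 2) hb_sum i
    have hin : ∀ p : List V, (∑ w : V, πb p w * (πθ p w / πb p w) ^ 2)
        = 1 + chiSq (πθ p) (πb p) := by
      intro p
      rw [← one_add_chiSq (πθ p) (πb p) (hb_pos p) (hθ_sum p) (hb_sum p)]
      refine Finset.sum_congr rfl fun w _ => ?_
      have hw := (hb_pos p w).ne'
      field_simp
    calc ∑ a : Fin H → V, traj H πb a * (tokRatio H πθ πb i a) ^ 2
        = ∑ a : Fin H → V, traj H πb a *
            ∑ w : V, πb ((List.ofFn a).take (i : ℕ)) w *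
              (πθ ((List.ofFn a).take (i : ℕ)) w / πb ((List.ofFn a).take (i : ℕ)) w) ^ 2 := h
      _ = ∑ a : Fin H → V, traj H πb a *
            (1 + chiSq (πθ ((List.ofFn a).take (i : ℕ))) (πb ((List.ofFn a).take (i : ℕ)))) := by
          refine Finset.sum_congr rfl fun a _ => ?_
          rw [hin]
      _ = 1 + avgChiSq H πθ πb i := by
          simp_rw [mul_add, mul_one, Finset.sum_add_distrib, hsum1]
          rfl
  -- variance of cumulative ratios
  have key : ∀ s : ℕ, pvar (traj H πb) (cumRatio H πθ πb s)
      = (∏ i ∈ Finset.univ.filter (fun i : Fin H => (i : ℕ) < s),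
          (1 + avgChiSq H πθ πb i)) - 1 := by
    intro s
    have hE : expec (traj H πb) (cumRatio H πθ πb s) = 1 := by
      unfold expec
      calc ∑ a : Fin H → V, traj H πb a * cumRatio H πθ πb s a
          = ∑ a : Fin H → V, traj H πb a *
              ∏ i : Fin H, (if (i : ℕ) < s then tokRatio H πθ πb i a else 1) := by
            refine Finset.sum_congr rfl fun a _ => ?_
            rw [cumRatio, Finset.prod_filter]
        _ = ∏ i : Fin H, ∑ a : Fin H → V, traj H πb a *
              (if (i : ℕ) < s then tokRatio H πθ πb i a else 1) :=
            expec_prod_of_indep (traj H πb) (fun i => tokRatio H πθ πb i) hind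
              (fun i x => if (i : ℕ) < s then x else 1)
        _ = 1 := by
            apply Finset.prod_eq_one
            intro i _
            by_cases hc : (i : ℕ) < s
            · simp only [if_pos hc]; exact mom1 i
            · simp only [if_neg hc, mul_one]; exact hsum1
    have hE2 : ∑ a : Fin H → V, traj H πb a * (cumRatio H πθ πb s a) ^ 2
        = ∏ i ∈ Finset.univ.filter (fun i : Fin H => (i : ℕ) < s),
            (1 + avgChiSq H πθ πb i) := by
      calc ∑ a : Fin H → V, traj H πb a * (cumRatio H πθ πb s a) ^ 2
          = ∑ a : Fin H → V, traj H πb a *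
              ∏ i : Fin H, (if (i : ℕ) < s then (tokRatio H πθ πb i a) ^ 2 else 1) := by
            refine Finset.sum_congr rfl fun a _ => ?_
            rw [cumRatio, ← Finset.prod_pow, Finset.prod_filter]
        _ = ∏ i : Fin H, ∑ a : Fin H → V, traj H πb a *
              (if (i : ℕ) < s then (tokRatio H πθ πb i a) ^ 2 else 1) :=
            expec_prod_of_indep (traj H πb) (fun i => tokRatio H πθ πb i) hind
              (fun i x => if (i : ℕ) < s then x ^ 2 else 1)
        _ = ∏ i : Fin H, (if (i : ℕ) < s then 1 + avgChiSq H πθ πb i else 1) := by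
            refine Finset.prod_congr rfl fun i _ => ?_
            by_cases hc : (i : ℕ) < s
            · simp only [if_pos hc]; exact mom2 i
            · simp only [if_neg hc, mul_one]; exact hsum1
        _ = ∏ i ∈ Finset.univ.filter (fun i : Fin H => (i : ℕ) < s),
              (1 + avgChiSq H πθ πb i) := (Finset.prod_filter _ _).symm
    rw [pvar_eq _ _ hsum1, hE, hE2, one_pow]
  have hunivH : Finset.univ.filter (fun i : Fin H => (i : ℕ) < H) = Finset.univ :=
    Finset.filter_true_of_mem (fun i _ => i.isLt)
  rw [key H, key t, hunivH]
end
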